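/- arXiv:2103.09383 — 2 statements merged into one kernel-verified Lean document; each statement's English description precedes it below -/
import Mathlib

section
/- In the planted matching model with P ≪ Q, let m, m* be perfect matchings of K_{n,n} with |m △ m*| = 2ℓ. Then for each x ≥ 0, P{ Δ(m) ≥ xℓ | M* = m* } ≤ ( (d/n) · exp(−(α + x/2)) )^ℓ, where α = −2 log B(P, Q). -/
open MeasureTheory
open scoped ENNReal BigOperators

noncomputable section

namespace PlantedMatching

/-- Perfect matchings of `K_{n,n}` are identified with permutations of `Fin n`:
the matching associated to `π` consists of the edges `(i, π i)`. We equip the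
(finite) set of perfect matchings with the discrete σ-algebra. -/
instance instMeasurablePerm {n : ℕ} : MeasurableSpace (Equiv.Perm (Fin n)) := ⊤

/-- Number of left vertices on which two matchings disagree;
`|M △ M'| = 2 * hamming`. -/
def hamming {n : ℕ} (π σ : Equiv.Perm (Fin n)) : ℕ :=
  (Finset.univ.filter fun i => π i ≠ σ i).card

/-- The reconstruction error `ℓ(M, M') = |M △ M'| / n`, valued in `ℝ≥0∞`. -/
def err {n : ℕ} (π σ : Equiv.Perm (Fin n)) : ℝ≥0∞ :=
  ((2 * hamming π σ : ℕ) : ℝ≥0∞) / (n : ℝ≥0∞)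

/-- The Bhattacharyya coefficient `B(P, Q) = ∫ √(f g) dμ`, computed with respect to
the dominating measure `P + Q`. -/
def bhat (P Q : Measure ℝ) : ℝ :=
  ∫ x, Real.sqrt ((P.rnDeriv (P + Q) x).toReal * (Q.rnDeriv (P + Q) x).toReal) ∂(P + Q)

/-- `α = -2 log B(P, Q)`, the Rényi divergence of order 1/2. -/
def alphaDiv (P Q : Measure ℝ) : ℝ := -(2 * Real.log (bhat P Q))

/-- The log-likelihood ratio `log (dP/dQ)` as a real-valued function. -/
def llrR (P Q : Measure ℝ) (x : ℝ) : ℝ := Real.log ((P.rnDeriv Q x).toReal)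

/-- The Kullback-Leibler divergence `D(P‖Q) = ∫ log (dP/dQ) dP`. -/
def klDiv' (P Q : Measure ℝ) : ℝ := ∫ x, llrR P Q x ∂P

/-- `τ_red`, the median of `log(dP/dQ)` under `P`. -/
def tauRed (P Q : Measure ℝ) : ℝ :=
  sInf {x : ℝ | 1 / 2 ≤ (P {y | llrR P Q y ≤ x}).toReal}

/-- The log-likelihood ratio `log(dP/dQ)` as an extended-real-valued function,
taking the value `⊥ = -∞` where the density `dP/dQ` vanishes. -/
def llrE (P Q : Measure ℝ) (x : ℝ) : EReal :=
  if P.rnDeriv Q x = 0 then (⊥ : EReal) else ((Real.log ((P.rnDeriv Q x).toReal) : ℝ) : EReal)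

/-!  ### The (sparse) planted matching observation model.
The observation alphabet is `Unit ⊕ ℝ`: the symbol `⋆ = Sum.inl ()` signifies a
non-edge, and `Sum.inr x` an edge of weight `x`. -/

/-- The distribution `Q' = (1 - d/n) δ_⋆ + (d/n) Q` of the observation on an
unplanted pair. -/
def Qprime (n : ℕ) (d : ℝ) (Q : Measure ℝ) : Measure (Unit ⊕ ℝ) :=
  ENNReal.ofReal (1 - d / n) • Measure.dirac (Sum.inl () : Unit ⊕ ℝ) +
    ENNReal.ofReal (d / n) • Q.map Sum.inr

/-- Law of the observation on the pair `e`, given that the planted matching is `π`. -/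
def edgeLaw (n : ℕ) (d : ℝ) (P Q : Measure ℝ) (π : Equiv.Perm (Fin n))
    (e : Fin n × Fin n) : Measure (Unit ⊕ ℝ) :=
  if e.2 = π e.1 then P.map Sum.inr else Qprime n d Q

/-- Conditional law of the whole observation `W`, given the planted matching `π`:
all pairs are independent. -/
def weightLaw (n : ℕ) (d : ℝ) (P Q : Measure ℝ) (π : Equiv.Perm (Fin n)) :
    Measure (Fin n × Fin n → Unit ⊕ ℝ) :=
  Measure.pi fun e => edgeLaw n d P Q π e

/-- Joint law of `(M*, W)` in the planted matching model: `M*` is uniform over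
perfect matchings and, conditionally on `M*`, the observations are as in `weightLaw`. -/
def jointLaw (n : ℕ) (d : ℝ) (P Q : Measure ℝ) :
    Measure (Equiv.Perm (Fin n) × (Fin n × Fin n → Unit ⊕ ℝ)) :=
  ((Fintype.card (Equiv.Perm (Fin n)) : ℝ≥0∞))⁻¹ •
    ∑ π : Equiv.Perm (Fin n), (Measure.dirac π).prod (weightLaw n d P Q π)

/-- A reference measure on the observation alphabet dominating both `P.map Sum.inr`
and `Q'`. -/
def refMeasure (n : ℕ) (d : ℝ) (P Q : Measure ℝ) : Measure (Unit ⊕ ℝ) :=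
  P.map Sum.inr + Qprime n d Q

/-- The likelihood of the matching `π` given the observation `w` (density of the
conditional law of `W` given `M* = π` with respect to the product reference measure);
a maximizer of this over `π` is a maximum likelihood estimator. -/
def likelihood (n : ℕ) (d : ℝ) (P Q : Measure ℝ) (π : Equiv.Perm (Fin n))
    (w : Fin n × Fin n → Unit ⊕ ℝ) : ℝ≥0∞ :=
  ∏ e : Fin n × Fin n, (edgeLaw n d P Q π e).rnDeriv (refMeasure n d P Q) (w e)

/-- The likelihood ratio `dP/dQ'` on the observation alphabet. -/
def lrO (n : ℕ) (d : ℝ) (P Q : Measure ℝ) : (Unit ⊕ ℝ) → ℝ≥0∞ :=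
  (P.map Sum.inr).rnDeriv (Qprime n d Q)

open Classical in
/-- Sum of `f` over the elements of a finite type satisfying `P`. -/
def sumOver {α : Type*} [Fintype α] (P : α → Prop) (f : α → ℝ≥0∞) : ℝ≥0∞ :=
  ∑ a : α, if P a then f a else 0

open Classical in
/-- Number of elements of a finite type satisfying `P`. -/
def countP {α : Type*} [Fintype α] (P : α → Prop) : ℕ :=
  (Finset.univ.filter P).card

open Classical in
/-- Number of elements of `s` satisfying `P`. -/
def countIn {α : Type*} (s : Finset α) (P : α → Prop) : ℕ :=
  (s.filter P).card

/-- `exp (Δ(m)) = μ_W(m) / μ_W(m*)`, the posterior mass of the matching `m` relative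
to that of the planted matching `m*` (`Δ(m)` is the excess log-likelihood of `m`;
the value `Δ(m) = -∞` corresponds to a vanishing ratio). -/
def postRatio (n : ℕ) (d : ℝ) (P Q : Measure ℝ) (mstar m : Equiv.Perm (Fin n))
    (w : Fin n × Fin n → Unit ⊕ ℝ) : ℝ≥0∞ :=
  (∏ i ∈ Finset.univ.filter fun i => m i ≠ mstar i, lrO n d P Q (w (i, m i))) *
    (∏ i ∈ Finset.univ.filter fun i => m i ≠ mstar i, lrO n d P Q (w (i, mstar i)))⁻¹

/-! ### The dense model (complete graph, real-valued weights). -/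

/-- Law of the weight of the edge `e`, given planted matching `π`, in the dense model. -/
def edgeLawD {n : ℕ} (P Q : Measure ℝ) (π : Equiv.Perm (Fin n)) (e : Fin n × Fin n) :
    Measure ℝ :=
  if e.2 = π e.1 then P else Q

/-- Conditional law of all weights given the planted matching, dense model. -/
def condLawD (n : ℕ) (P Q : Measure ℝ) (π : Equiv.Perm (Fin n)) :
    Measure (Fin n × Fin n → ℝ) :=
  Measure.pi fun e => edgeLawD P Q π e

/-- Joint law of `(M*, W)` in the dense model. -/
def jointLawD (n : ℕ) (P Q : Measure ℝ) :
    Measure (Equiv.Perm (Fin n) × (Fin n × Fin n → ℝ)) :=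
  ((Fintype.card (Equiv.Perm (Fin n)) : ℝ≥0∞))⁻¹ •
    ∑ π : Equiv.Perm (Fin n), (Measure.dirac π).prod (condLawD n P Q π)

/-- Likelihood of the matching `π` given the weights `w` in the dense model
(densities taken with respect to the dominating measure `P + Q`). -/
def likelihoodD (n : ℕ) (P Q : Measure ℝ) (π : Equiv.Perm (Fin n))
    (w : Fin n × Fin n → ℝ) : ℝ≥0∞ :=
  ∏ e : Fin n × Fin n, (edgeLawD P Q π e).rnDeriv (P + Q) (w e)

/-! ### The exponential model. -/

/-- The exponential distribution with rate `r`. -/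
def expMeasure (r : ℝ) : Measure ℝ :=
  volume.withDensity fun x => ENNReal.ofReal (if 0 ≤ x then r * Real.exp (-(r * x)) else 0)

/-- Conditional law of the weights given the planted matching `mstar` in the exponential
model: planted edges carry `Exp(λ)` weights, the others `Exp(1/n)` weights. -/
def condLawE (n : ℕ) (lam : ℝ) (mstar : Equiv.Perm (Fin n)) :
    Measure (Fin n × Fin n → ℝ) :=
  Measure.pi fun e => if e.2 = mstar e.1 then expMeasure lam else expMeasure (1 / n)

/-- Joint law of `(M*, W)` in the exponential model. -/
def jointLawE (n : ℕ) (lam : ℝ) :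
    Measure (Equiv.Perm (Fin n) × (Fin n × Fin n → ℝ)) :=
  ((Fintype.card (Equiv.Perm (Fin n)) : ℝ≥0∞))⁻¹ •
    ∑ π : Equiv.Perm (Fin n), (Measure.dirac π).prod (condLawE n lam π)

/-- Likelihood ratio of `Exp(λ)` versus `Exp(1/n)`. -/
def lrE (n : ℕ) (lam : ℝ) : ℝ → ℝ≥0∞ :=
  (expMeasure lam).rnDeriv (expMeasure (1 / n))

/-- `exp (Δ(m))` in the exponential model. -/
def postRatioE (n : ℕ) (lam : ℝ) (mstar m : Equiv.Perm (Fin n))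
    (w : Fin n × Fin n → ℝ) : ℝ≥0∞ :=
  (∏ i ∈ Finset.univ.filter fun i => m i ≠ mstar i, lrE n lam (w (i, m i))) *
    (∏ i ∈ Finset.univ.filter fun i => m i ≠ mstar i, lrE n lam (w (i, mstar i)))⁻¹

/-- The explicit log-likelihood ratio `log(p/q)(w) = log (n λ) - (λ - 1/n) w` in the
exponential model. -/
def llrExp (n : ℕ) (lam x : ℝ) : ℝ := Real.log (n * lam) - (lam - 1 / n) * x

/-! ### Unweighted random graphs. -/

/-- The Bernoulli distribution on `Bool` with success probability `p`. -/
def bernoulliBool (p : ℝ) : Measure Bool :=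
  ENNReal.ofReal (1 - p) • Measure.dirac false + ENNReal.ofReal p • Measure.dirac true

/-- Bipartite Erdős–Rényi graph on `[n] × [n]'` with edge probability `p`;
`ω (i, j) = true` iff there is a (blue) edge between left vertex `i` and right
vertex `j'`. -/
def erGraph (n : ℕ) (p : ℝ) : Measure (Fin n × Fin n → Bool) :=
  Measure.pi fun _ => bernoulliBool p

/-- Joint law of `(M*, G)` in the unweighted planted matching model. -/
def jointLawU (n : ℕ) (d : ℝ) :
    Measure (Equiv.Perm (Fin n) × (Fin n × Fin n → Bool)) :=
  ((Fintype.card (Equiv.Perm (Fin n)) : ℝ≥0∞))⁻¹ •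
    ∑ π : Equiv.Perm (Fin n), (Measure.dirac π).prod
      (Measure.pi fun e => if e.2 = π e.1 then Measure.dirac true else bernoulliBool (d / n))

/-! ### The sprinkling construction. -/

open Classical in
/-- `A_k' = {v' ∈ (V*)' : v' has a blue-edge neighbor in L_k}` (right vertices are
identified with left vertices via the planted matching). -/
def AsetS {n : ℕ} (Vstar : Finset (Fin n)) (L : Fin n → Finset (Fin n))
    (ω : Fin n × Fin n → Bool) (k : Fin n) : Finset (Fin n) :=
  Vstar.filter fun v => ∃ u ∈ L k, ω (u, v) = true

open Classical in
/-- `B_k = {v ∈ V* : v has a blue-edge neighbor in R_k}`. -/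
def BsetS {n : ℕ} (Vstar : Finset (Fin n)) (R : Fin n → Finset (Fin n))
    (ω : Fin n × Fin n → Bool) (k : Fin n) : Finset (Fin n) :=
  Vstar.filter fun v => ∃ u ∈ R k, ω (v, u) = true

open Classical in
/-- `d_v = Σ_k 1{v' ∈ A_k'} + Σ_k 1{v ∈ B_k}`. -/
def dvalS {n : ℕ} (Vstar K1 : Finset (Fin n)) (L R : Fin n → Finset (Fin n))
    (ω : Fin n × Fin n → Bool) (v : Fin n) : ℕ :=
  (K1.filter fun k => v ∈ AsetS Vstar L ω k).card +
    (K1.filter fun k => v ∈ BsetS Vstar R ω k).card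

open Classical in
/-- `A_overlap = {v ∈ V* : d_v ≥ 2}`. -/
def AoverlapS {n : ℕ} (Vstar K1 : Finset (Fin n)) (L R : Fin n → Finset (Fin n))
    (ω : Fin n × Fin n → Bool) : Finset (Fin n) :=
  Vstar.filter fun v => 2 ≤ dvalS Vstar K1 L R ω v

/-- `U_k' = A_k' ∖ A_overlap'`. -/
def UsetS {n : ℕ} (Vstar K1 : Finset (Fin n)) (L R : Fin n → Finset (Fin n))
    (ω : Fin n × Fin n → Bool) (k : Fin n) : Finset (Fin n) :=
  AsetS Vstar L ω k \ AoverlapS Vstar K1 L R ω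

/-- `V_k = B_k ∖ A_overlap`. -/
def VsetS {n : ℕ} (Vstar K1 : Finset (Fin n)) (L R : Fin n → Finset (Fin n))
    (ω : Fin n × Fin n → Bool) (k : Fin n) : Finset (Fin n) :=
  BsetS Vstar R ω k \ AoverlapS Vstar K1 L R ω

open Classical in
/-- `𝒦₂ = {k ∈ 𝒦₁ : |U_k'| ≥ b and |V_k| ≥ b}`. -/
def K2S {n : ℕ} (Vstar K1 : Finset (Fin n)) (L R : Fin n → Finset (Fin n))
    (ω : Fin n × Fin n → Bool) (b : ℝ) : Finset (Fin n) :=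
  K1.filter fun k =>
    b ≤ ((UsetS Vstar K1 L R ω k).card : ℝ) ∧ b ≤ ((VsetS Vstar K1 L R ω k).card : ℝ)

/-- Blue adjacency of the super graph: `i` and `j'` are joined iff some blue edge of
`G₂` connects `U_i` and `V_j'`. -/
def BlS {n : ℕ} (Vstar K1 : Finset (Fin n)) (L R : Fin n → Finset (Fin n))
    (ω : Fin n × Fin n → Bool) (i j : Fin n) : Prop :=
  ∃ u ∈ UsetS Vstar K1 L R ω i, ∃ v ∈ VsetS Vstar K1 L R ω j, ω (u, v) = true

/-- `E` is the blue-edge set of an alternating cycle of length `≥ minLen` (the length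
is the number of edges, `2r` for a cycle through `r` red edges), with vertices in `S`,
in the bi-colored bipartite graph whose red edges are `{(k, k') : k ∈ S}` and whose
blue adjacency is `Bl`. -/
def IsAltCycleEdges {n : ℕ} (S : Finset (Fin n)) (Bl : Fin n → Fin n → Prop)
    (minLen : ℝ) (E : Finset (Fin n × Fin n)) : Prop :=
  ∃ (r : ℕ) (_ : NeZero r) (c : ZMod r → Fin n),
    Function.Injective c ∧ (∀ t, c t ∈ S) ∧ (∀ t : ZMod r, Bl (c (t + 1)) (c t)) ∧
      minLen ≤ (2 * r : ℝ) ∧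
      E = Finset.image (fun t : ZMod r => (c (t + 1), c t)) Finset.univ

/-! ### Alternating paths in the exponential model.
A `(2ℓ-1)`-alternating path (relative to the planted matching `mstar`) is encoded by an
injective map `p : Fin ℓ → Fin n`: its red edges are `(p k, (p k)')` and its blue
edges are `(p (k+1), (p k)')`, where `i' = mstar i`. -/

/-- Total red weight `wt_r(P)` of the path encoded by `p`. -/
def pwtR {n ℓ : ℕ} (mstar : Equiv.Perm (Fin n)) (w : Fin n × Fin n → ℝ)
    (p : Fin ℓ → Fin n) : ℝ :=
  ∑ k : Fin ℓ, w (p k, mstar (p k))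

/-- Sum of the first `m` red weights of the path. -/
def pwtRpartial {n ℓ : ℕ} (mstar : Equiv.Perm (Fin n)) (w : Fin n × Fin n → ℝ)
    (p : Fin ℓ → Fin n) (m : ℕ) : ℝ :=
  ∑ k : Fin ℓ, if (k : ℕ) < m then w (p k, mstar (p k)) else 0

/-- Total blue weight `wt_b(P)` of the path encoded by `p`. -/
def pwtB {n ℓ : ℕ} (mstar : Equiv.Perm (Fin n)) (w : Fin n × Fin n → ℝ)
    (p : Fin ℓ → Fin n) : ℝ :=
  ∑ k : Fin ℓ, ∑ k' : Fin ℓ,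
    if (k' : ℕ) = (k : ℕ) + 1 then w (p k', mstar (p k)) else 0

/-- Sum of the first `m` blue weights of the path. -/
def pwtBpartial {n ℓ : ℕ} (mstar : Equiv.Perm (Fin n)) (w : Fin n × Fin n → ℝ)
    (p : Fin ℓ → Fin n) (m : ℕ) : ℝ :=
  ∑ k : Fin ℓ, ∑ k' : Fin ℓ,
    if (k' : ℕ) = (k : ℕ) + 1 ∧ (k : ℕ) < m then w (p k', mstar (p k)) else 0

/-- The path is `(a, b, η)`-light: `|wt_r(P) - aℓ| ≤ η/2` and `|wt_b(P) - b(ℓ-1)| ≤ η/2`. -/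
def IsLight {n ℓ : ℕ} (mstar : Equiv.Perm (Fin n)) (w : Fin n × Fin n → ℝ)
    (p : Fin ℓ → Fin n) (a b η : ℝ) : Prop :=
  |pwtR mstar w p - a * ℓ| ≤ η / 2 ∧ |pwtB mstar w p - b * ((ℓ : ℝ) - 1)| ≤ η / 2

/-- The path is `A`-uniform: `dev_r(P) ≤ A` and `dev_b(P) ≤ A`. -/
def IsUniform {n ℓ : ℕ} (mstar : Equiv.Perm (Fin n)) (w : Fin n × Fin n → ℝ)
    (p : Fin ℓ → Fin n) (A : ℝ) : Prop :=
  (∀ m : ℕ, 1 ≤ m → m ≤ ℓ →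
      |pwtRpartial mstar w p m * ℓ / pwtR mstar w p - m| ≤ A) ∧
  (∀ m : ℕ, 1 ≤ m → m ≤ ℓ - 1 →
      |pwtBpartial mstar w p m * ((ℓ : ℝ) - 1) / pwtB mstar w p - m| ≤ A)

/-- `|S|`: the number of `(2ℓ-1)`-alternating paths that are `(a,b,η)`-light and
`A`-uniform. -/
def countS (n ℓ : ℕ) (mstar : Equiv.Perm (Fin n)) (a b η A : ℝ)
    (w : Fin n × Fin n → ℝ) : ℕ :=
  countP fun p : Fin ℓ → Fin n =>
    Function.Injective p ∧ IsLight mstar w p a b η ∧ IsUniform mstar w p A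

end PlantedMatching

/-! Chernoff bound at exponent `1/2`: by Markov's inequality,
`P{Δ(m) ≥ xℓ} ≤ e^{-xℓ/2} E[e^{Δ(m)/2}]`. Given `M* = m*`, the `2ℓ` weights entering `Δ(m)` are
independent. Each of the `ℓ` edges of `m ∖ m*` has law `Q'` and contributes
`E_{Q'}[(dP/dQ')^{1/2}] = √(d/n) B(P, Q)`; each of the `ℓ` edges of `m* ∖ m` has law `P` and
contributes `E_P[(dP/dQ')^{-1/2}] ≤ E_{Q'}[(dP/dQ')^{1/2}]`. Hence
`E[e^{Δ(m)/2}] ≤ ((d/n) B(P, Q)²)^ℓ = ((d/n) e^{-α})^ℓ`. -/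

theorem ENNReal.rpow_half_mul_rpow_half (x : ℝ≥0∞) : x ^ (1 / 2 : ℝ) * x ^ (1 / 2 : ℝ) = x := by
  rw [← sq, ← ENNReal.rpow_natCast, ← ENNReal.rpow_mul]
  norm_num

theorem ENNReal.ofReal_rpow_half (x : ℝ) :
    ENNReal.ofReal x ^ (1 / 2 : ℝ) = ENNReal.ofReal (Real.sqrt x) := by
  rcases le_total 0 x with hx | hx
  · rw [ENNReal.ofReal_rpow_of_nonneg hx (by norm_num), Real.sqrt_eq_rpow]
  · rw [ENNReal.ofReal_of_nonpos hx, Real.sqrt_eq_zero_of_nonpos hx, ENNReal.ofReal_zero,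
      ENNReal.zero_rpow_of_pos (by norm_num)]

theorem ENNReal.mul_inv_rpow_half_le (x : ℝ≥0∞) : x * (x ^ (1 / 2 : ℝ))⁻¹ ≤ x ^ (1 / 2 : ℝ) := by
  rw [← div_eq_mul_inv]
  exact ENNReal.div_le_of_le_mul (ENNReal.rpow_half_mul_rpow_half x).ge

namespace MeasureTheory

theorem meas_sq_le_le_lintegral_rpow_half_div {α : Type*} [MeasurableSpace α] {μ : Measure α}
    {f : α → ℝ≥0∞} (hf : AEMeasurable f μ) {c : ℝ≥0∞} (hc0 : c ≠ 0) (hct : c ≠ ∞) :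
    μ {x | c ^ 2 ≤ f x} ≤ (∫⁻ x, f x ^ (1 / 2 : ℝ) ∂μ) / c := by
  refine (measure_mono fun x (hx : c ^ 2 ≤ f x) => ?_).trans
    (meas_ge_le_lintegral_div (hf.pow_const _) hc0 hct)
  change c ≤ f x ^ (1 / 2 : ℝ)
  rwa [one_div, ENNReal.le_rpow_inv_iff two_pos, ENNReal.rpow_two]

theorem lintegral_inv_rpow_half_rnDeriv_le {α : Type*} [MeasurableSpace α] {μ ν : Measure α}
    [μ.HaveLebesgueDecomposition ν] (hμν : μ ≪ ν) :
    ∫⁻ x, ((μ.rnDeriv ν x) ^ (1 / 2 : ℝ))⁻¹ ∂μ ≤ ∫⁻ x, (μ.rnDeriv ν x) ^ (1 / 2 : ℝ) ∂ν := by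
  have hf := Measure.measurable_rnDeriv μ ν
  set g := μ.rnDeriv ν
  conv_lhs => rw [← Measure.withDensity_rnDeriv_eq μ ν hμν]
  rw [lintegral_withDensity_eq_lintegral_mul _ hf
    (show Measurable fun x => (g x ^ (1 / 2 : ℝ))⁻¹ from (hf.pow_const _).inv)]
  exact lintegral_mono fun x => ENNReal.mul_inv_rpow_half_le _

theorem lintegral_pi_finsetProd {ι : Type*} [Fintype ι] {Ω : ι → Type*}
    [∀ i, MeasurableSpace (Ω i)] (μ : ∀ i, Measure (Ω i)) [∀ i, IsProbabilityMeasure (μ i)]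
    (s : Finset ι) {f : ∀ i, Ω i → ℝ≥0∞} (hf : ∀ i, Measurable (f i)) :
    ∫⁻ ω, ∏ i ∈ s, f i (ω i) ∂Measure.pi μ = ∏ i ∈ s, ∫⁻ x, f i x ∂μ i := by
  rw [ProbabilityTheory.lintegral_prod_eq_prod_lintegral_of_indepFun s _
    (ProbabilityTheory.iIndepFun_pi fun i => (hf i).aemeasurable)
    fun i => (hf i).comp (measurable_pi_apply i)]
  exact Finset.prod_congr rfl fun i _ => (measurePreserving_eval μ i).lintegral_comp (hf i)

end MeasureTheory

namespace PlantedMatching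

theorem lintegral_rpow_half_eq_bhat {P Q : Measure ℝ} [IsFiniteMeasure P] [IsFiniteMeasure Q]
    {h : ℝ → ℝ≥0∞} (hh : Measurable h) (hPQ : Q.withDensity h = P) :
    ∫⁻ x, h x ^ (1 / 2 : ℝ) ∂Q = ENNReal.ofReal (bhat P Q) := by
  set ν := P + Q
  set p := P.rnDeriv ν
  set q := Q.rnDeriv ν
  have hq : Measurable q := Measure.measurable_rnDeriv Q ν
  have hQ : ν.withDensity q = Q :=
    Measure.withDensity_rnDeriv_eq Q ν
      (Measure.absolutelyContinuous_of_le (Measure.le_add_left le_rfl))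
  have hpqh : p =ᵐ[ν] q * h := by
    have hP : ν.withDensity (q * h) = P := by rw [withDensity_mul ν hq hh, hQ, hPQ]
    have := Measure.rnDeriv_withDensity ν (hq.mul hh)
    rwa [hP] at this
  have hint : Integrable (fun x => Real.sqrt ((p x).toReal * (q x).toReal)) ν := by
    refine ((Measure.integrable_toReal_rnDeriv (μ := P) (ν := ν)).add
      (Measure.integrable_toReal_rnDeriv (μ := Q))).mono'
      (by fun_prop) (Filter.Eventually.of_forall fun x => ?_)
    rw [Real.norm_of_nonneg (Real.sqrt_nonneg _), Pi.add_apply]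
    have := (p x).toReal_nonneg
    have := (q x).toReal_nonneg
    exact Real.sqrt_le_iff.2 ⟨by positivity, by nlinarith⟩
  calc ∫⁻ x, h x ^ (1 / 2 : ℝ) ∂Q = ∫⁻ x, q x * h x ^ (1 / 2 : ℝ) ∂ν := by
        rw [← hQ, lintegral_withDensity_eq_lintegral_mul _ hq (hh.pow_const _)]
        rfl
    _ = ∫⁻ x, (p x * q x) ^ (1 / 2 : ℝ) ∂ν := by
        refine lintegral_congr_ae ?_
        filter_upwards [hpqh] with x hx
        rw [hx, Pi.mul_apply, mul_right_comm, ← sq,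
          ENNReal.mul_rpow_of_nonneg _ _ (by norm_num : (0 : ℝ) ≤ 1 / 2),
          ← ENNReal.rpow_natCast, ← ENNReal.rpow_mul]
        norm_num
    _ = ∫⁻ x, ENNReal.ofReal (Real.sqrt ((p x).toReal * (q x).toReal)) ∂ν := by
        refine lintegral_congr_ae ?_
        filter_upwards [Measure.rnDeriv_lt_top P ν, Measure.rnDeriv_lt_top Q ν] with x hpx hqx
        rw [Real.sqrt_eq_rpow, ← ENNReal.toReal_mul,
          ← ENNReal.ofReal_rpow_of_nonneg ENNReal.toReal_nonneg (by norm_num),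
          ENNReal.ofReal_toReal (ENNReal.mul_ne_top hpx.ne hqx.ne)]
    _ = ENNReal.ofReal (bhat P Q) :=
        (ofReal_integral_eq_lintegral_ofReal hint
          (Filter.Eventually.of_forall fun _ => Real.sqrt_nonneg _)).symm

theorem bhat_nonneg (P Q : Measure ℝ) : 0 ≤ bhat P Q :=
  integral_nonneg fun _ => Real.sqrt_nonneg _

theorem sq_bhat_le_exp_neg_alphaDiv (P Q : Measure ℝ) :
    bhat P Q ^ 2 ≤ Real.exp (-alphaDiv P Q) := by
  rcases (bhat_nonneg P Q).eq_or_lt with hB0 | hBpos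
  · rw [← hB0, sq, zero_mul]
    exact (Real.exp_pos _).le
  · refine le_of_eq ?_
    calc bhat P Q ^ 2 = Real.exp (Real.log (bhat P Q ^ 2)) := (Real.exp_log (by positivity)).symm
      _ = Real.exp (-alphaDiv P Q) := by rw [Real.log_pow, alphaDiv, neg_neg]; norm_num

section Observation

variable {n : ℕ} {d : ℝ} {P Q : Measure ℝ}

instance isFiniteMeasure_Qprime [IsFiniteMeasure Q] : IsFiniteMeasure (Qprime n d Q) := by
  constructor
  simp [Qprime, measure_lt_top, ENNReal.mul_lt_top]

theorem isProbabilityMeasure_Qprime [IsProbabilityMeasure Q] (hd0 : 0 ≤ d) (hdn : d ≤ n) :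
    IsProbabilityMeasure (Qprime n d Q) := by
  have : IsProbabilityMeasure (Q.map (Sum.inr : ℝ → Unit ⊕ ℝ)) :=
    Measure.isProbabilityMeasure_map measurable_inr.aemeasurable
  have hdn' : d / n ≤ 1 := div_le_one_of_le₀ hdn (Nat.cast_nonneg n)
  constructor
  simp only [Qprime, Measure.add_apply, Measure.smul_apply, measure_univ, smul_eq_mul, mul_one]
  rw [← ENNReal.ofReal_add (by linarith) (by positivity)]
  simp

theorem isProbabilityMeasure_edgeLaw [IsProbabilityMeasure P] [IsProbabilityMeasure Q]
    (hd0 : 0 ≤ d) (hdn : d ≤ n) (π : Equiv.Perm (Fin n)) (e : Fin n × Fin n) :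
    IsProbabilityMeasure (edgeLaw n d P Q π e) := by
  unfold edgeLaw
  split_ifs
  · exact Measure.isProbabilityMeasure_map measurable_inr.aemeasurable
  · exact isProbabilityMeasure_Qprime hd0 hdn

instance isFiniteMeasure_edgeLaw [IsFiniteMeasure P] [IsFiniteMeasure Q]
    (π : Equiv.Perm (Fin n)) (e : Fin n × Fin n) : IsFiniteMeasure (edgeLaw n d P Q π e) := by
  unfold edgeLaw
  split_ifs <;> infer_instance

theorem lintegral_Qprime {f : Unit ⊕ ℝ → ℝ≥0∞} (hf : Measurable f) :
    ∫⁻ y, f y ∂Qprime n d Q =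
      ENNReal.ofReal (1 - d / n) * f (Sum.inl ()) +
        ENNReal.ofReal (d / n) * ∫⁻ x, f (Sum.inr x) ∂Q := by
  rw [Qprime, lintegral_add_measure, lintegral_smul_measure, lintegral_smul_measure,
    lintegral_dirac' _ hf, lintegral_map hf measurable_inr, smul_eq_mul, smul_eq_mul]

theorem withDensity_lrO_inr [SFinite P] [IsFiniteMeasure Q]
    (habs : P.map Sum.inr ≪ Qprime n d Q) :
    Q.withDensity (fun x => ENNReal.ofReal (d / n) * lrO n d P Q (Sum.inr x)) = P := by
  have hg : Measurable (lrO n d P Q) := Measure.measurable_rnDeriv _ _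
  ext A hA
  have himg : MeasurableSet (Sum.inr '' A : Set (Unit ⊕ ℝ)) := measurableSet_inr_image.2 hA
  calc Q.withDensity (fun x => ENNReal.ofReal (d / n) * lrO n d P Q (Sum.inr x)) A
      = ∫⁻ y, (Sum.inr '' A).indicator (lrO n d P Q) y ∂Qprime n d Q := by
        have hA' : ∀ x, (Sum.inr '' A).indicator (lrO n d P Q) (Sum.inr x) =
            A.indicator (fun x => lrO n d P Q (Sum.inr x)) x := fun x => by
          by_cases hx : x ∈ A <;> simp [hx]
        rw [lintegral_Qprime (hg.indicator himg), withDensity_apply _ hA,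
          lintegral_const_mul _ (show Measurable fun x => lrO n d P Q (Sum.inr x) from
            hg.comp measurable_inr)]
        simp only [hA', lintegral_indicator hA]
        simp
    _ = P A := by
        rw [lintegral_indicator himg, lrO, Measure.setLIntegral_rnDeriv' habs himg,
          Measure.map_apply measurable_inr himg, Set.preimage_image_eq _ Sum.inr_injective]

theorem ofReal_one_sub_mul_lrO_inl [SFinite P] [IsFiniteMeasure Q]
    (habs : P.map Sum.inr ≪ Qprime n d Q) :
    ENNReal.ofReal (1 - d / n) * lrO n d P Q (Sum.inl ()) = 0 := by
  have hg : Measurable (lrO n d P Q) := Measure.measurable_rnDeriv _ _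
  have hs : MeasurableSet (Set.range (Sum.inl : Unit → Unit ⊕ ℝ)) := measurableSet_range_inl
  calc ENNReal.ofReal (1 - d / n) * lrO n d P Q (Sum.inl ())
      = ∫⁻ y, (Set.range Sum.inl).indicator (lrO n d P Q) y ∂Qprime n d Q := by
        rw [lintegral_Qprime (hg.indicator hs)]
        simp
    _ = 0 := by
        rw [lintegral_indicator hs, lrO, Measure.setLIntegral_rnDeriv' habs hs,
          Measure.map_apply measurable_inr hs]
        simp

theorem lintegral_rpow_half_lrO_Qprime [IsFiniteMeasure P] [IsFiniteMeasure Q]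
    (habs : P.map Sum.inr ≪ Qprime n d Q) :
    ∫⁻ y, lrO n d P Q y ^ (1 / 2 : ℝ) ∂Qprime n d Q =
      ENNReal.ofReal (Real.sqrt (d / n) * bhat P Q) := by
  have hg : Measurable (lrO n d P Q) := Measure.measurable_rnDeriv _ _
  have hgr : Measurable fun x => lrO n d P Q (Sum.inr x) := hg.comp measurable_inr
  have hstar : ENNReal.ofReal (1 - d / n) * lrO n d P Q (Sum.inl ()) ^ (1 / 2 : ℝ) = 0 := by
    rcases mul_eq_zero.1 (ofReal_one_sub_mul_lrO_inl habs) with h | h <;> simp [h]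
  have hscale (c y : ℝ≥0∞) : c * y ^ (1 / 2 : ℝ) = c ^ (1 / 2 : ℝ) * (c * y) ^ (1 / 2 : ℝ) := by
    rw [ENNReal.mul_rpow_of_nonneg _ _ (by norm_num), ← mul_assoc,
      ENNReal.rpow_half_mul_rpow_half]
  calc ∫⁻ y, lrO n d P Q y ^ (1 / 2 : ℝ) ∂Qprime n d Q
      = ENNReal.ofReal (d / n) * ∫⁻ x, lrO n d P Q (Sum.inr x) ^ (1 / 2 : ℝ) ∂Q := by
        rw [lintegral_Qprime (hg.pow_const _), hstar, zero_add]
    _ = ENNReal.ofReal (d / n) ^ (1 / 2 : ℝ) *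
          ∫⁻ x, (ENNReal.ofReal (d / n) * lrO n d P Q (Sum.inr x)) ^ (1 / 2 : ℝ) ∂Q := by
        rw [← lintegral_const_mul _ (hgr.pow_const _),
          ← lintegral_const_mul _ ((hgr.const_mul _).pow_const _)]
        exact lintegral_congr fun x => hscale _ _
    _ = ENNReal.ofReal (Real.sqrt (d / n)) * ENNReal.ofReal (bhat P Q) := by
        rw [lintegral_rpow_half_eq_bhat (hgr.const_mul _) (withDensity_lrO_inr habs),
          ENNReal.ofReal_rpow_half]
    _ = ENNReal.ofReal (Real.sqrt (d / n) * bhat P Q) :=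
        (ENNReal.ofReal_mul (Real.sqrt_nonneg _)).symm

def edgeFactor (n : ℕ) (d : ℝ) (P Q : Measure ℝ) (mstar : Equiv.Perm (Fin n))
    (e : Fin n × Fin n) (y : Unit ⊕ ℝ) : ℝ≥0∞ :=
  if e.2 = mstar e.1 then (lrO n d P Q y ^ (1 / 2 : ℝ))⁻¹ else lrO n d P Q y ^ (1 / 2 : ℝ)

theorem measurable_edgeFactor (mstar : Equiv.Perm (Fin n)) (e : Fin n × Fin n) :
    Measurable (edgeFactor n d P Q mstar e) := by
  have hg : Measurable (lrO n d P Q) := Measure.measurable_rnDeriv _ _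
  unfold edgeFactor
  split_ifs
  · exact (hg.pow_const _).inv
  · exact hg.pow_const _

theorem lintegral_edgeFactor_le [IsFiniteMeasure P] [IsFiniteMeasure Q]
    (habs : P.map Sum.inr ≪ Qprime n d Q) (mstar : Equiv.Perm (Fin n)) (e : Fin n × Fin n) :
    ∫⁻ y, edgeFactor n d P Q mstar e y ∂edgeLaw n d P Q mstar e ≤
      ENNReal.ofReal (Real.sqrt (d / n) * bhat P Q) := by
  rw [← lintegral_rpow_half_lrO_Qprime habs]
  unfold edgeFactor edgeLaw
  split_ifs
  · exact lintegral_inv_rpow_half_rnDeriv_le habs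
  · exact le_rfl

theorem hamming_comm (π σ : Equiv.Perm (Fin n)) : hamming π σ = hamming σ π := by
  simp only [hamming, ne_comm]

def diffEdges (π σ : Equiv.Perm (Fin n)) : Finset (Fin n × Fin n) :=
  (Finset.univ.filter fun i => π i ≠ σ i).image fun i => (i, π i)

theorem card_diffEdges (π σ : Equiv.Perm (Fin n)) : (diffEdges π σ).card = hamming π σ :=
  Finset.card_image_of_injective _ fun _ _ h => congrArg Prod.fst h

theorem disjoint_diffEdges (π σ : Equiv.Perm (Fin n)) :
    Disjoint (diffEdges π σ) (diffEdges σ π) := by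
  simp only [diffEdges, Finset.disjoint_left, Finset.mem_image, Finset.mem_filter]
  rintro _ ⟨i, ⟨-, hi⟩, rfl⟩ ⟨j, -, hji⟩
  obtain ⟨rfl, h⟩ := Prod.ext_iff.1 hji
  exact hi h.symm

theorem prod_diffEdges (π σ : Equiv.Perm (Fin n)) (f : Fin n × Fin n → ℝ≥0∞) :
    ∏ e ∈ diffEdges π σ, f e = ∏ i ∈ Finset.univ.filter (fun i => π i ≠ σ i), f (i, π i) :=
  Finset.prod_image fun _ _ _ _ h => congrArg Prod.fst h

theorem measurable_postRatio (mstar m : Equiv.Perm (Fin n)) :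
    Measurable (postRatio n d P Q mstar m) := by
  have hg : Measurable (lrO n d P Q) := Measure.measurable_rnDeriv _ _
  exact (Finset.measurable_prod _ fun _ _ => hg.comp (measurable_pi_apply _)).mul
    (Finset.measurable_prod _ fun _ _ => hg.comp (measurable_pi_apply _)).inv

theorem postRatio_rpow_half_ae_eq [IsFiniteMeasure P] [IsFiniteMeasure Q]
    (habs : P.map Sum.inr ≪ Qprime n d Q) (mstar m : Equiv.Perm (Fin n)) :
    (fun w => postRatio n d P Q mstar m w ^ (1 / 2 : ℝ)) =ᵐ[weightLaw n d P Q mstar]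
      fun w => ∏ e ∈ diffEdges m mstar ∪ diffEdges mstar m, edgeFactor n d P Q mstar e (w e) := by
  -- In `ℝ≥0∞`, `(∏ a)⁻¹ = ∏ a⁻¹` fails once one factor is `∞` and another `0`; almost surely
  -- no planted factor is `∞`.
  have hfin : ∀ᵐ w ∂weightLaw n d P Q mstar,
      ∀ i ∈ Finset.univ.filter (fun i => m i ≠ mstar i), lrO n d P Q (w (i, mstar i)) ≠ ∞ := by
    refine (Filter.eventually_all_finset _).2 fun i _ => ?_
    have : ∀ᵐ y ∂edgeLaw n d P Q mstar (i, mstar i), lrO n d P Q y ≠ ∞ := by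
      simp only [edgeLaw, if_true]
      exact habs.ae_le (Measure.rnDeriv_ne_top _ _)
    exact Measure.tendsto_eval_ae_ae.eventually this
  filter_upwards [hfin] with w hw
  rw [Finset.prod_union (disjoint_diffEdges m mstar), prod_diffEdges, prod_diffEdges, postRatio,
    ENNReal.prod_inv_distrib fun i _ j hj _ => Or.inr (hw j hj),
    ENNReal.mul_rpow_of_nonneg _ _ (by norm_num), ← ENNReal.prod_rpow_of_nonneg (by norm_num),
    ← ENNReal.prod_rpow_of_nonneg (by norm_num)]
  simp only [ne_comm (a := mstar _)]
  congr 1 <;> refine Finset.prod_congr rfl fun i hi => ?_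
  · simp [edgeFactor, (Finset.mem_filter.1 hi).2]
  · simp [edgeFactor, ENNReal.inv_rpow]

theorem lintegral_rpow_half_postRatio_le [IsProbabilityMeasure P] [IsProbabilityMeasure Q]
    (hd0 : 0 ≤ d) (hdn : d ≤ n) (habs : P.map Sum.inr ≪ Qprime n d Q)
    (mstar m : Equiv.Perm (Fin n)) :
    ∫⁻ w, postRatio n d P Q mstar m w ^ (1 / 2 : ℝ) ∂weightLaw n d P Q mstar ≤
      ENNReal.ofReal (Real.sqrt (d / n) * bhat P Q) ^ (2 * hamming m mstar) := by
  have := isProbabilityMeasure_edgeLaw (P := P) (Q := Q) hd0 hdn mstar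
  have hcard : (diffEdges m mstar ∪ diffEdges mstar m).card = 2 * hamming m mstar := by
    rw [Finset.card_union_of_disjoint (disjoint_diffEdges m mstar), card_diffEdges,
      card_diffEdges, hamming_comm mstar, two_mul]
  rw [lintegral_congr_ae (postRatio_rpow_half_ae_eq habs mstar m), weightLaw,
    lintegral_pi_finsetProd _ _ (measurable_edgeFactor mstar), ← hcard]
  exact Finset.prod_le_pow_card _ _ _ fun e _ => lintegral_edgeFactor_le habs mstar e

theorem ofReal_sqrt_mul_bhat_pow_div_le {a : ℝ} (ha : 0 ≤ a) (x : ℝ) (ℓ : ℕ) :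
    ENNReal.ofReal (Real.sqrt a * bhat P Q) ^ (2 * ℓ) / ENNReal.ofReal (Real.exp (x / 2)) ^ ℓ ≤
      ENNReal.ofReal ((a * Real.exp (-(alphaDiv P Q + x / 2))) ^ ℓ) := by
  have hfactor : (Real.sqrt a * bhat P Q) ^ 2 * (Real.exp (x / 2))⁻¹ ≤
      a * Real.exp (-(alphaDiv P Q + x / 2)) := by
    rw [← Real.exp_neg, neg_add, Real.exp_add, mul_pow, Real.sq_sqrt ha, mul_assoc]
    gcongr
    exact sq_bhat_le_exp_neg_alphaDiv P Q
  rw [div_eq_mul_inv, pow_mul, ENNReal.inv_pow, ← mul_pow,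
    ← ENNReal.ofReal_pow (mul_nonneg (Real.sqrt_nonneg a) (bhat_nonneg P Q)),
    ← ENNReal.ofReal_inv_of_pos (Real.exp_pos _), ← ENNReal.ofReal_mul (by positivity),
    ENNReal.ofReal_pow (by positivity)]
  gcongr

end Observation

/-- Lemma 3.3: if `|m △ m*| = 2ℓ`, then for `x ≥ 0`,
`P{Δ(m) ≥ xℓ | M* = m*} ≤ ((d/n) exp(-(α + x/2)))^ℓ` where `α = -2 log B(P,Q)`. -/
theorem stmt8 :
    ∀ (n : ℕ) (d : ℝ) (P Q : Measure ℝ),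
      IsProbabilityMeasure P → IsProbabilityMeasure Q →
      0 ≤ d → d ≤ n →
      P.map Sum.inr ≪ Qprime n d Q →
      ∀ (mstar m : Equiv.Perm (Fin n)) (ℓ : ℕ), hamming m mstar = ℓ →
      ∀ x : ℝ, 0 ≤ x →
        weightLaw n d P Q mstar
            {w | ENNReal.ofReal (Real.exp (x * ℓ)) ≤ postRatio n d P Q mstar m w} ≤
          ENNReal.ofReal ((d / n * Real.exp (-(alphaDiv P Q + x / 2))) ^ ℓ) := by
  intro n d P Q _ _ hd0 hdn habs mstar m ℓ hℓ x _
  subst hℓ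
  set ℓ := hamming m mstar
  set c := ENNReal.ofReal (Real.exp (x / 2))
  have hthreshold : ENNReal.ofReal (Real.exp (x * ℓ)) = (c ^ ℓ) ^ 2 := by
    rw [← pow_mul, ← ENNReal.ofReal_pow (Real.exp_pos _).le, ← Real.exp_nat_mul]
    congr 2
    push_cast
    ring
  calc weightLaw n d P Q mstar
        {w | ENNReal.ofReal (Real.exp (x * ℓ)) ≤ postRatio n d P Q mstar m w}
      ≤ (∫⁻ w, postRatio n d P Q mstar m w ^ (1 / 2 : ℝ) ∂weightLaw n d P Q mstar) / c ^ ℓ := by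
        rw [hthreshold]
        exact meas_sq_le_le_lintegral_rpow_half_div (measurable_postRatio mstar m).aemeasurable
          (pow_ne_zero _ (by simp [c, Real.exp_pos])) (by simp [c])
    _ ≤ ENNReal.ofReal (Real.sqrt (d / n) * bhat P Q) ^ (2 * ℓ) / c ^ ℓ := by
        gcongr
        exact lintegral_rpow_half_postRatio_le hd0 hdn habs mstar m
    _ ≤ ENNReal.ofReal ((d / n * Real.exp (-(alphaDiv P Q + x / 2))) ^ ℓ) :=
        ofReal_sqrt_mul_bhat_pow_div_le (by positivity) x ℓ

end PlantedMatching
end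
end

section
/- Let G be a bi-colored bipartite graph on [n] × [n]' whose n red edges form the perfect matching {(i, i') : i ∈ [n]}, and whose blue edges are generated as a bipartite Erdős–Rényi graph: each pair (i, j') with i ≠ j is a blue edge independently with probability D/n. If n ≥ 525 and D ≥ 256·log(32e), then with probability at least 1 − exp(−Dn/2^{14}), G contains at least exp(n/20) distinct alternating cycles, each of length at least 3n/4. -/
open MeasureTheory
open scoped ENNReal BigOperators

noncomputable section

/-!
Call a relation `t`-joining if any two disjoint sets of `t + 1` vertices are joined by an edge
from the first to the second. With `t = ⌊n/16⌋`, a union bound over the at most `4^n` pairs of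
such sets shows that the blue graph fails to be `t`-joining with probability at most
`4^n (1 - D/n)^((t+1)^2) ≤ exp(-Dn/2^14)`.

In a `t`-joining digraph, depth-first search inside any vertex set `V` keeps at most `t` dead
vertices and stops with at most `t` unvisited ones, so its stack is a path through all but `2t`
vertices of `V`; an edge from the first `t + 1` to the last `t + 1` vertices of this path closes
a cycle through all but `4t` vertices of `V`. Applied to the complement of each `k`-set `X`,
`k = ⌊n/8⌋`, this gives a long alternating cycle avoiding `X`. A cycle with at least
`n - k - 4t` vertices avoids at most `C(k + 4t, k) ≤ 2^(-k) C(n, k)` of the `k`-sets, so there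
are at least `2^k ≥ exp(n/20)` distinct cycles.
-/

theorem Nat.pow_mul_descFactorial_le_descFactorial {c a b : ℕ} (h : c * b ≤ a) (k : ℕ) :
    c ^ k * b.descFactorial k ≤ a.descFactorial k := by
  induction k with
  | zero => simp
  | succ k ih =>
    rw [Nat.descFactorial_succ, Nat.descFactorial_succ]
    have hstep : c * (b - k) ≤ a - k := by
      rcases Nat.eq_zero_or_pos c with rfl | hc
      · simp
      · have := Nat.le_mul_of_pos_left k hc
        rw [Nat.mul_sub]
        omega
    calc c ^ (k + 1) * ((b - k) * b.descFactorial k)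
        = c * (b - k) * (c ^ k * b.descFactorial k) := by ring
      _ ≤ (a - k) * a.descFactorial k := Nat.mul_le_mul hstep ih

theorem Nat.pow_mul_choose_le_choose {c a b : ℕ} (h : c * b ≤ a) (k : ℕ) :
    c ^ k * b.choose k ≤ a.choose k := by
  have := Nat.pow_mul_descFactorial_le_descFactorial h k
  rw [Nat.descFactorial_eq_factorial_mul_choose, Nat.descFactorial_eq_factorial_mul_choose,
    mul_left_comm] at this
  exact Nat.le_of_mul_le_mul_left this k.factorial_pos

open Finset in
theorem Finset.choose_le_card_mul_choose {α : Type*} [Fintype α] [DecidableEq α]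
    {𝒴 : Finset (Finset α)} {k s : ℕ} (hlarge : ∀ Y ∈ 𝒴, s ≤ #Y)
    (hcover : ∀ X : Finset α, #X = k → ∃ Y ∈ 𝒴, Disjoint Y X) :
    (Fintype.card α).choose k ≤ #𝒴 * (Fintype.card α - s).choose k := by
  calc (Fintype.card α).choose k = #(powersetCard k (univ : Finset α)) := by
        rw [card_powersetCard, card_univ]
    _ ≤ #(𝒴.biUnion fun Y => powersetCard k Yᶜ) := card_le_card fun X hX => by
        obtain ⟨Y, hY, hYX⟩ := hcover X (mem_powersetCard.1 hX).2
        refine mem_biUnion.2 ⟨Y, hY, mem_powersetCard.2 ⟨fun x hx => ?_, (mem_powersetCard.1 hX).2⟩⟩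
        exact mem_compl.2 fun hxY => disjoint_left.1 hYX hxY hx
    _ ≤ ∑ Y ∈ 𝒴, #(powersetCard k Yᶜ) := card_biUnion_le
    _ ≤ ∑ _Y ∈ 𝒴, (Fintype.card α - s).choose k := sum_le_sum fun Y hY => by
        rw [card_powersetCard, card_compl]
        exact Nat.choose_le_choose k (Nat.sub_le_sub_left (hlarge Y hY) _)
    _ = #𝒴 * (Fintype.card α - s).choose k := by rw [sum_const, smul_eq_mul]

namespace PlantedMatching

open Finset

section Paths

variable {α : Type*} {r : α → α → Prop} {t : ℕ}

def JoinsDisjointSets (r : α → α → Prop) (t : ℕ) : Prop :=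
  ∀ S T : Finset α, Disjoint S T → #S = t + 1 → #T = t + 1 → ∃ a ∈ S, ∃ b ∈ T, r a b

theorem JoinsDisjointSets.exists_rel (h : JoinsDisjointSets r t) {S T : Finset α}
    (hST : Disjoint S T) (hS : t < #S) (hT : t < #T) : ∃ a ∈ S, ∃ b ∈ T, r a b := by
  obtain ⟨S', hS'S, hS'⟩ := exists_subset_card_eq hS
  obtain ⟨T', hT'T, hT'⟩ := exists_subset_card_eq hT
  obtain ⟨a, ha, b, hb, hab⟩ := h S' T' (hST.mono hS'S hT'T) hS' hT'
  exact ⟨a, hS'S ha, b, hT'T hb, hab⟩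

theorem exists_cycle_of_rel_getElem {l : List α} (hnd : l.Nodup) (hl : l.IsChain (flip r))
    {i j : ℕ} (hij : i ≤ j) (hj : j < l.length) (hr : r l[i] l[j]) :
    ∃ c : ZMod (j - i + 1) → α,
      Function.Injective c ∧ (∀ z, r (c (z + 1)) (c z)) ∧ ∀ z, c z ∈ l := by
  have hlt : ∀ z : ZMod (j - i + 1), i + z.val < l.length := fun z => by
    have := ZMod.val_lt z
    omega
  refine ⟨fun z => l[i + z.val]'(hlt z), fun z z' h => ?_, fun z => ?_,
    fun z => List.getElem_mem _⟩
  · have := hnd.getElem_inj_iff.1 h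
    exact ZMod.val_injective _ (by omega)
  · have hz := ZMod.val_lt z
    have hval : (z + 1).val = (z.val + 1) % (j - i + 1) := by
      rw [ZMod.val_add, ZMod.val_one_eq_one_mod, Nat.add_mod_mod]
    rcases Nat.lt_or_ge (z.val + 1) (j - i + 1) with h | h
    · rw [Nat.mod_eq_of_lt h] at hval
      simp only [hval, ← add_assoc]
      exact List.isChain_iff_getElem.1 hl _ (by omega)
    · -- the closing edge
      rw [show z.val + 1 = j - i + 1 by omega, Nat.mod_self] at hval
      simp only [hval, add_zero, show i + z.val = j by omega]
      exact hr

variable [DecidableEq α]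

def unvisited (V D : Finset α) (l : List α) : Finset α := V \ (D ∪ l.toFinset)

theorem unvisited_cons (V D : Finset α) (l : List α) (u : α) :
    unvisited V D (u :: l) = (unvisited V D l).erase u := by
  rw [unvisited, unvisited, List.toFinset_cons, union_insert, sdiff_insert]

theorem unvisited_insert (V D : Finset α) (l : List α) (v : α) :
    unvisited V (insert v D) l = unvisited V D (v :: l) := by
  rw [unvisited, unvisited, List.toFinset_cons, union_insert, insert_union]

/-- A state of depth-first search in `V` with dead set `D` and stack `l`; the stack is a path
whose edges point towards its head. -/
structure IsDFSState (r : α → α → Prop) (t : ℕ) (V D : Finset α) (l : List α) : Prop where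
  nodup : l.Nodup
  isChain : l.IsChain (flip r)
  subset : D ∪ l.toFinset ⊆ V
  disjoint : Disjoint D l.toFinset
  card_dead_le : #D ≤ t
  not_rel : ∀ d ∈ D, ∀ u ∈ unvisited V D l, ¬ r d u

variable {V D : Finset α} {l : List α}

theorem isDFSState_empty (V : Finset α) : IsDFSState r t V ∅ [] :=
  ⟨List.nodup_nil, List.isChain_nil, by simp, by simp, by simp, by simp⟩

theorem IsDFSState.card_unvisited_add (hs : IsDFSState r t V D l) :
    #(unvisited V D l) + #D + l.length = #V := by
  rw [unvisited, card_sdiff_of_subset hs.subset, card_union_of_disjoint hs.disjoint,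
    List.toFinset_card_of_nodup hs.nodup]
  have := card_le_card hs.subset
  rw [card_union_of_disjoint hs.disjoint, List.toFinset_card_of_nodup hs.nodup] at this
  omega

theorem IsDFSState.push (hs : IsDFSState r t V D l) {u : α} (hu : u ∈ unvisited V D l)
    (hr : ∀ v ∈ l.head?, r v u) : IsDFSState r t V D (u :: l) := by
  simp only [unvisited, mem_sdiff, mem_union, List.mem_toFinset, not_or] at hu
  refine ⟨List.nodup_cons.2 ⟨hu.2.2, hs.nodup⟩, List.isChain_cons.2 ⟨hr, hs.isChain⟩, ?_, ?_,
    hs.card_dead_le, fun d hd w hw => hs.not_rel d hd w ?_⟩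
  · rw [List.toFinset_cons, union_insert]
    exact insert_subset hu.1 hs.subset
  · rw [List.toFinset_cons, disjoint_insert_right]
    exact ⟨hu.2.1, hs.disjoint⟩
  · rw [unvisited_cons] at hw
    exact mem_of_mem_erase hw

theorem IsDFSState.pop (hJ : JoinsDisjointSets r t) {v : α} (hs : IsDFSState r t V D (v :: l))
    (hU : t < #(unvisited V D (v :: l))) (hv : ∀ u ∈ unvisited V D (v :: l), ¬ r v u) :
    IsDFSState r t V (insert v D) l := by
  have hnot_rel : ∀ d ∈ insert v D, ∀ u ∈ unvisited V D (v :: l), ¬ r d u := by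
    rintro d hd u hu
    rcases mem_insert.1 hd with rfl | hd
    exacts [hv u hu, hs.not_rel d hd u hu]
  refine ⟨(List.nodup_cons.1 hs.nodup).2, hs.isChain.tail, ?_, ?_, ?_, ?_⟩
  · simpa [insert_union, union_insert] using hs.subset
  · rw [disjoint_insert_left]
    refine ⟨by simpa using (List.nodup_cons.1 hs.nodup).1, hs.disjoint.mono_right ?_⟩
    simp [List.toFinset_cons, subset_insert]
  · by_contra! hD
    have hdisj : Disjoint (insert v D) (unvisited V D (v :: l)) := by
      simp only [disjoint_left, unvisited, mem_sdiff, mem_union, mem_insert, List.toFinset_cons]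
      tauto
    obtain ⟨d, hd, u, hu, hdu⟩ := hJ.exists_rel hdisj hD hU
    exact hnot_rel d hd u hu hdu
  · rw [unvisited_insert]
    exact hnot_rel

theorem exists_isDFSState_card_unvisited_le (hJ : JoinsDisjointSets r t) (V : Finset α) :
    ∃ D l, IsDFSState r t V D l ∧ #(unvisited V D l) ≤ t := by
  suffices h : ∀ N D l, IsDFSState r t V D l → 2 * #(unvisited V D l) + l.length = N →
      ∃ D l, IsDFSState r t V D l ∧ #(unvisited V D l) ≤ t from
    h _ ∅ [] (isDFSState_empty V) rfl
  intro N
  induction N using Nat.strong_induction_on with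
  | _ N ih =>
  intro D l hs hN
  by_cases hU : #(unvisited V D l) ≤ t
  · exact ⟨D, l, hs, hU⟩
  push Not at hU
  by_cases hpush : ∃ u ∈ unvisited V D l, ∀ v ∈ l.head?, r v u
  · obtain ⟨u, hu, hr⟩ := hpush
    refine ih _ ?_ D (u :: l) (hs.push hu hr) rfl
    rw [unvisited_cons, card_erase_of_mem hu, List.length_cons]
    omega
  · push Not at hpush
    obtain ⟨u, hu⟩ := card_pos.1 (by omega : 0 < #(unvisited V D l))
    cases l with
    | nil => simpa using hpush u hu
    | cons v l =>
      refine ih _ ?_ (insert v D) l (hs.pop hJ hU fun u hu => ?_) rfl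
      · rw [unvisited_insert, ← hN, List.length_cons]
        omega
      · simpa using hpush u hu

theorem exists_path_of_joinsDisjointSets (hJ : JoinsDisjointSets r t) (V : Finset α) :
    ∃ l : List α, l.Nodup ∧ l.IsChain (flip r) ∧ (∀ x ∈ l, x ∈ V) ∧ #V ≤ l.length + 2 * t := by
  obtain ⟨D, l, hs, hU⟩ := exists_isDFSState_card_unvisited_le hJ V
  refine ⟨l, hs.nodup, hs.isChain, fun x hx => hs.subset (by simp [hx]), ?_⟩
  have := hs.card_unvisited_add
  have := hs.card_dead_le
  omega

theorem exists_long_cycle_of_joinsDisjointSets (hJ : JoinsDisjointSets r t) {V : Finset α}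
    (hV : 4 * t + 2 ≤ #V) :
    ∃ (m : ℕ) (_ : NeZero m) (c : ZMod m → α), Function.Injective c ∧
      (∀ z, r (c (z + 1)) (c z)) ∧ (∀ z, c z ∈ V) ∧ #V ≤ m + 4 * t := by
  obtain ⟨l, hnd, hl, hlV, hlen⟩ := exists_path_of_joinsDisjointSets hJ V
  have hlen' : 2 * t + 2 ≤ l.length := by omega
  -- an edge from the first `t + 1` vertices of the path to its last `t + 1` closes a cycle
  let S := univ.image fun k : Fin (t + 1) => l[k.val]'(by omega)
  let T := univ.image fun k : Fin (t + 1) => l[l.length - 1 - k.val]'(by omega)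
  have hS : #S = t + 1 := by
    rw [card_image_of_injective, card_univ, Fintype.card_fin]
    exact fun k k' h => Fin.ext (hnd.getElem_inj_iff.1 h)
  have hT : #T = t + 1 := by
    rw [card_image_of_injective, card_univ, Fintype.card_fin]
    exact fun k k' h => Fin.ext (by have := hnd.getElem_inj_iff.1 h; omega)
  have hST : Disjoint S T := by
    simp only [S, T, disjoint_left, mem_image, mem_univ, true_and]
    rintro _ ⟨k, rfl⟩ ⟨k', h⟩
    have := hnd.getElem_inj_iff.1 h
    omega
  obtain ⟨a, ha, b, hb, hab⟩ := hJ S T hST hS hT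
  obtain ⟨k, -, rfl⟩ := mem_image.1 ha
  obtain ⟨k', -, rfl⟩ := mem_image.1 hb
  obtain ⟨c, hc, hcr, hcl⟩ := exists_cycle_of_rel_getElem hnd hl (by omega) (by omega) hab
  exact ⟨_, inferInstance, c, hc, hcr, fun z => hlV _ (hcl z), by omega⟩

end Paths

def blueAdj {n : ℕ} (ω : Fin n × Fin n → Bool) (i j : Fin n) : Prop := ω (i, j) = true ∧ i ≠ j

open Classical in
def longAltCycles {n : ℕ} (ω : Fin n × Fin n → Bool) : Finset (Finset (Fin n × Fin n)) :=
  {E | IsAltCycleEdges univ (blueAdj ω) (3 * n / 4) E}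

theorem mem_longAltCycles {n : ℕ} {ω : Fin n × Fin n → Bool} {E : Finset (Fin n × Fin n)} :
    E ∈ longAltCycles ω ↔ IsAltCycleEdges univ (blueAdj ω) (3 * n / 4) E := by
  simp [longAltCycles]

theorem two_pow_le_card_longAltCycles {n : ℕ} (hn : 2 ≤ n) {ω : Fin n × Fin n → Bool}
    (hJ : JoinsDisjointSets (blueAdj ω) (n / 16)) : 2 ^ (n / 8) ≤ #(longAltCycles ω) := by
  classical
  set k := n / 8
  set t := n / 16
  -- the vertex sets of the long cycles
  let 𝒴 := ((longAltCycles ω).image fun E => E.image Prod.snd).filter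
    fun Y => n - k - 4 * t ≤ #Y
  have hcover : ∀ X : Finset (Fin n), #X = k → ∃ Y ∈ 𝒴, Disjoint Y X := by
    intro X hX
    have hXc : #Xᶜ = n - k := by rw [card_compl, Fintype.card_fin, hX]
    obtain ⟨m, _, c, hc, hcr, hcX, hm⟩ :=
      exists_long_cycle_of_joinsDisjointSets hJ (V := Xᶜ) (by omega)
    have hlen : (3 * n / 4 : ℝ) ≤ 2 * m := by
      have : 3 * n ≤ 8 * m := by omega
      have : (3 * n : ℝ) ≤ 8 * m := by exact_mod_cast this
      linarith
    have hE : univ.image (fun z => (c (z + 1), c z)) ∈ longAltCycles ω :=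
      mem_longAltCycles.2 ⟨m, inferInstance, c, hc, fun _ => mem_univ _, hcr, hlen, rfl⟩
    refine ⟨univ.image c, mem_filter.2 ⟨mem_image.2 ⟨_, hE, by rw [image_image]; rfl⟩, ?_⟩, ?_⟩
    · rw [card_image_of_injective _ hc, card_univ, ZMod.card]
      omega
    · simp only [disjoint_left, mem_image, mem_univ, true_and]
      rintro _ ⟨z, rfl⟩
      exact mem_compl.1 (hcX z)
  have hcount := Finset.choose_le_card_mul_choose (fun Y hY => (mem_filter.1 hY).2) hcover
  rw [Fintype.card_fin] at hcount
  have hchoose := Nat.pow_mul_choose_le_choose (c := 2) (b := n - (n - k - 4 * t)) (a := n)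
    (by omega) k
  have h𝒴 : 2 ^ k ≤ #𝒴 :=
    Nat.le_of_mul_le_mul_right (hchoose.trans hcount) (Nat.choose_pos (by omega))
  exact h𝒴.trans ((card_filter_le _ _).trans card_image_le)

instance (p : ℝ) : IsFiniteMeasure (bernoulliBool p) :=
  ⟨by simp [bernoulliBool]⟩

theorem bernoulliBool_false (p : ℝ) : bernoulliBool p {false} = ENNReal.ofReal (1 - p) := by
  simp [bernoulliBool]

theorem bernoulliBool_univ (p : ℝ) :
    bernoulliBool p Set.univ = ENNReal.ofReal (1 - p) + ENNReal.ofReal p := by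
  simp [bernoulliBool]

def blueEdgeLaw {n : ℕ} (p : ℝ) (e : Fin n × Fin n) : Measure Bool :=
  if e.1 = e.2 then Measure.dirac false else bernoulliBool p

instance {n : ℕ} (p : ℝ) (e : Fin n × Fin n) : IsFiniteMeasure (blueEdgeLaw p e) := by
  unfold blueEdgeLaw
  split <;> infer_instance

section BlueGraph

variable {n : ℕ} {p : ℝ}

theorem one_le_blueEdgeLaw_univ (e : Fin n × Fin n) : 1 ≤ blueEdgeLaw p e Set.univ := by
  unfold blueEdgeLaw
  split
  · simp
  · rw [bernoulliBool_univ, ← ENNReal.ofReal_one]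
    exact (ENNReal.ofReal_le_ofReal (by linarith)).trans ENNReal.ofReal_add_le

theorem one_le_measure_pi_blueEdgeLaw_univ :
    1 ≤ Measure.pi (blueEdgeLaw (n := n) p) Set.univ := by
  rw [← Set.pi_univ Set.univ, Measure.pi_pi]
  exact one_le_prod' fun e _ => one_le_blueEdgeLaw_univ e

theorem blueEdgeLaw_univ_le_one (hp₀ : 0 ≤ p) (hp₁ : p ≤ 1) (e : Fin n × Fin n) :
    blueEdgeLaw p e Set.univ ≤ 1 := by
  unfold blueEdgeLaw
  split
  · simp
  · rw [bernoulliBool_univ, ← ENNReal.ofReal_add (by linarith) hp₀]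
    simp

theorem blueEdgeLaw_false_le {e : Fin n × Fin n} (he : e.1 ≠ e.2) :
    blueEdgeLaw p e {false} ≤ ENNReal.ofReal (Real.exp (-p)) := by
  rw [blueEdgeLaw, if_neg he, bernoulliBool_false]
  exact ENNReal.ofReal_le_ofReal (by linarith [Real.add_one_le_exp (-p)])

theorem measure_forall_eq_false_le (hp : 0 ≤ p) {F : Finset (Fin n × Fin n)}
    (hF : F.Nonempty) (hoff : ∀ e ∈ F, e.1 ≠ e.2) :
    Measure.pi (blueEdgeLaw p) {ω | ∀ e ∈ F, ω e = false} ≤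
      ENNReal.ofReal (Real.exp (-p)) ^ #F := by
  have hset : {ω : Fin n × Fin n → Bool | ∀ e ∈ F, ω e = false} =
      Set.pi Set.univ fun e => if e ∈ F then {false} else Set.univ := by
    ext ω
    simp only [Set.mem_ofPred_eq, Set.mem_pi, Set.mem_univ, true_implies]
    refine forall_congr' fun e => ?_
    split_ifs <;> simp_all
  rw [hset, Measure.pi_pi]
  rcases le_or_gt p 1 with hp₁ | hp₁
  · calc ∏ e, blueEdgeLaw p e (if e ∈ F then {false} else Set.univ)
        ≤ ∏ e, if e ∈ F then ENNReal.ofReal (Real.exp (-p)) else 1 :=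
          prod_le_prod' fun e _ => by
            split_ifs with he
            exacts [blueEdgeLaw_false_le (hoff e he), blueEdgeLaw_univ_le_one hp hp₁ e]
      _ = ENNReal.ofReal (Real.exp (-p)) ^ #F := by
          rw [prod_ite_mem, univ_inter, prod_const]
  · -- for `p > 1` the junk value `ofReal (1 - p) = 0` makes the product vanish
    obtain ⟨e, he⟩ := hF
    refine (prod_eq_zero (mem_univ e) ?_).trans_le zero_le
    rw [if_pos he, blueEdgeLaw, if_neg (hoff e he), bernoulliBool_false,
      ENNReal.ofReal_eq_zero.2 (by linarith)]

theorem measure_not_joinsDisjointSets_le (hp : 0 ≤ p) (t : ℕ) :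
    Measure.pi (blueEdgeLaw p) {ω | ¬ JoinsDisjointSets (blueAdj (n := n) ω) t} ≤
      4 ^ n * ENNReal.ofReal (Real.exp (-p)) ^ ((t + 1) ^ 2) := by
  classical
  let pairs : Finset (Finset (Fin n) × Finset (Fin n)) :=
    {q | Disjoint q.1 q.2 ∧ #q.1 = t + 1 ∧ #q.2 = t + 1}
  have hsub : {ω | ¬ JoinsDisjointSets (blueAdj ω) t} ⊆
      ⋃ q ∈ pairs, {ω | ∀ e ∈ q.1 ×ˢ q.2, ω e = false} := by
    intro ω hω
    simp only [JoinsDisjointSets, Set.mem_ofPred_eq, not_forall, not_exists, not_and] at hω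
    obtain ⟨S, T, hST, hS, hT, hno⟩ := hω
    refine Set.mem_biUnion (x := (S, T)) (by simp [pairs, hST, hS, hT]) ?_
    simp only [Set.mem_ofPred_eq, mem_product, and_imp, Prod.forall]
    intro a b ha hb
    have hab : a ≠ b := fun h => disjoint_left.1 hST ha (h ▸ hb)
    simpa [blueAdj, hab] using hno a ha b hb
  have hpairs : #pairs ≤ 4 ^ n := by
    calc #pairs ≤ Fintype.card (Finset (Fin n) × Finset (Fin n)) := card_le_univ _
      _ = 4 ^ n := by simp [Fintype.card_finset, ← mul_pow]
  calc Measure.pi (blueEdgeLaw p) {ω | ¬ JoinsDisjointSets (blueAdj ω) t}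
      ≤ ∑ q ∈ pairs, Measure.pi (blueEdgeLaw p) {ω | ∀ e ∈ q.1 ×ˢ q.2, ω e = false} :=
        (measure_mono hsub).trans (measure_biUnion_finset_le _ _)
    _ ≤ ∑ _q ∈ pairs, ENNReal.ofReal (Real.exp (-p)) ^ ((t + 1) ^ 2) := sum_le_sum fun q hq => by
        simp only [pairs, mem_filter, mem_univ, true_and] at hq
        obtain ⟨hST, hS, hT⟩ := hq
        have hne : (q.1 ×ˢ q.2).Nonempty :=
          (card_pos.1 (by omega)).product (card_pos.1 (by omega))
        have hoff : ∀ e ∈ q.1 ×ˢ q.2, e.1 ≠ e.2 := fun e he h =>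
          disjoint_left.1 hST (mem_product.1 he).1 (h ▸ (mem_product.1 he).2)
        calc _ ≤ _ := measure_forall_eq_false_le hp hne hoff
          _ = _ := by rw [card_product, hS, hT, sq]
    _ ≤ 4 ^ n * ENNReal.ofReal (Real.exp (-p)) ^ ((t + 1) ^ 2) := by
        rw [sum_const, nsmul_eq_mul]
        gcongr
        exact_mod_cast hpairs

end BlueGraph

theorem exp_div_twenty_le_two_pow {n : ℕ} (hn : 17 ≤ n) :
    Real.exp (n / 20) ≤ 2 ^ (n / 8) := by
  have hk : (n : ℝ) ≤ 8 * (n / 8 : ℕ) + 7 := by exact_mod_cast (by omega : n ≤ 8 * (n / 8) + 7)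
  have hn' : (17 : ℝ) ≤ n := by exact_mod_cast hn
  have hlog := Real.log_two_gt_d9
  rw [← Real.rpow_natCast, Real.rpow_def_of_pos two_pos]
  apply Real.exp_le_exp.2
  nlinarith

theorem four_pow_mul_exp_le {n : ℕ} {D : ℝ} (hn : 0 < n)
    (hD : 256 * Real.log (32 * Real.exp 1) ≤ D) :
    (4 : ℝ≥0∞) ^ n * ENNReal.ofReal (Real.exp (-(D / n))) ^ ((n / 16 + 1) ^ 2) ≤
      ENNReal.ofReal (Real.exp (-(D * n / 2 ^ 14))) := by
  have hlog : Real.log (32 * Real.exp 1) = 5 * Real.log 2 + 1 := by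
    rw [Real.log_mul (by norm_num) (Real.exp_ne_zero 1), Real.log_exp,
      show (32 : ℝ) = 2 ^ 5 by norm_num, Real.log_pow]
    push_cast
    ring
  have hlog2 := Real.log_two_gt_d9
  have hD' : 1280 * Real.log 2 + 256 ≤ D := by linarith
  have hn' : (0 : ℝ) < n := by exact_mod_cast hn
  have hm : (n : ℝ) ^ 2 / 256 ≤ ((n / 16 + 1) ^ 2 : ℕ) := by
    have : (n : ℝ) ≤ 16 * ((n / 16 : ℕ) + 1) := by exact_mod_cast (by omega : n ≤ 16 * (n / 16 + 1))
    push_cast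
    nlinarith
  have hkey : D * n / 256 ≤ ((n / 16 + 1) ^ 2 : ℕ) * (D / n) := by
    calc D * n / 256 = (n : ℝ) ^ 2 / 256 * (D / n) := by field_simp
      _ ≤ _ := mul_le_mul_of_nonneg_right hm (div_nonneg (by linarith) hn'.le)
  rw [← ENNReal.ofReal_pow (Real.exp_nonneg _), ← Real.exp_nat_mul,
    show (4 : ℝ≥0∞) ^ n = ENNReal.ofReal (Real.exp (n * (2 * Real.log 2))) by
      rw [Real.exp_nat_mul, ← Real.log_rpow two_pos, Real.exp_log (by positivity),
        ENNReal.ofReal_pow (by positivity)]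
      norm_num,
    ← ENNReal.ofReal_mul (Real.exp_nonneg _), ← Real.exp_add]
  gcongr
  nlinarith

/-- Lemma 5.4: a bipartite graph on `[n] × [n]'` whose red edges
form the perfect matching `{(i,i')}` and whose blue edges appear independently with
probability `D/n` (for `i ≠ j`) contains, with probability at least
`1 - exp(-Dn/2^14)`, at least `exp(n/20)` distinct alternating cycles of length at
least `3n/4`, provided `n ≥ 525` and `D ≥ 256 log(32e)`. -/
theorem stmt13 :
    ∀ (n : ℕ) (D : ℝ), 525 ≤ n → 256 * Real.log (32 * Real.exp 1) ≤ D →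
      ENNReal.ofReal (1 - Real.exp (-(D * n / 2 ^ 14))) ≤
        (Measure.pi fun e : Fin n × Fin n =>
            if e.1 = e.2 then Measure.dirac false else bernoulliBool (D / n))
          {ω | ∃ 𝒞 : Finset (Finset (Fin n × Fin n)),
              Real.exp ((n : ℝ) / 20) ≤ (𝒞.card : ℝ) ∧
              ∀ E ∈ 𝒞,
                IsAltCycleEdges Finset.univ
                  (fun i j => ω (i, j) = true ∧ i ≠ j) (3 * n / 4) E} := by
  intro n D hn hD
  have h32e : 1 ≤ 32 * Real.exp 1 := by linarith [Real.add_one_le_exp (1 : ℝ)]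
  have hD₀ : 0 ≤ D := (mul_nonneg (by norm_num) (Real.log_nonneg h32e)).trans hD
  change _ ≤ Measure.pi (blueEdgeLaw (D / n)) _
  set good := {ω : Fin n × Fin n → Bool | JoinsDisjointSets (blueAdj ω) (n / 16)}
  calc ENNReal.ofReal (1 - Real.exp (-(D * n / 2 ^ 14)))
      = 1 - ENNReal.ofReal (Real.exp (-(D * n / 2 ^ 14))) := by
        rw [ENNReal.ofReal_sub _ (Real.exp_nonneg _), ENNReal.ofReal_one]
    _ ≤ Measure.pi (blueEdgeLaw (D / n)) Set.univ - Measure.pi (blueEdgeLaw (D / n)) goodᶜ :=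
        tsub_le_tsub one_le_measure_pi_blueEdgeLaw_univ
          ((measure_not_joinsDisjointSets_le (by positivity) _).trans
            (four_pow_mul_exp_le (by omega) hD))
    _ ≤ Measure.pi (blueEdgeLaw (D / n)) (Set.univ \ goodᶜ) := le_measure_sdiff
    _ ≤ _ := measure_mono fun ω hω => by
        have hJ : JoinsDisjointSets (blueAdj ω) (n / 16) := by simpa [good] using hω
        exact ⟨longAltCycles ω, (exp_div_twenty_le_two_pow (by omega)).trans
          (by exact_mod_cast two_pow_le_card_longAltCycles (by omega) hJ),
          fun E hE => mem_longAltCycles.1 hE⟩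

end PlantedMatching
end
end
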